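/- The Last Come, First Matched policy is sub-additive: for any two finite arrival words z' and z'', |Q_LCFM(z'z'')| ≤ |Q_LCFM(z')| + |Q_LCFM(z'')|. -/

import Mathlib

/-!
Starting from a buffer `w` instead of the empty one, processing `z''` ends with at most
`|w| + |Q_LCFM(z'')|` items; applied to `w = Q_LCFM(z')` this is the claim. The bound follows by
induction on `w` from the fact that one extra item anywhere in the buffer stays "one item
apart" forever: after each arrival the two buffers again differ by the insertion of a single
item, into one or the other of them. Reading buffers newest first, an LCFM step erases the
first compatible item (`List.eraseP`) or pushes the arrival in front.
-/

variable {V : Type*} [DecidableEq V]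

/-- One step of Last Come, First Matched: the arriving item of class `v` is matched
with (removes) the most recently arrived compatible item of the buffer `w` (listed
oldest first), and joins the buffer if there is none. -/
def lcfmStep (G : SimpleGraph V) [DecidableRel G.Adj] (w : List V) (v : V) : List V :=
  match w.reverse.findIdx? (fun u => decide (G.Adj u v)) with
  | some k => (w.reverse.eraseIdx k).reverse
  | none => w ++ [v]

/-- The buffer content after processing the arrival word `z` under LCFM from an empty
system. -/
def lcfmQ (G : SimpleGraph V) [DecidableRel G.Adj] (z : List V) : List V :=
  z.foldl (lcfmStep G) []

open List

variable {α : Type*}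

def IsOneInsertion (s r : List α) : Prop := ∃ l x t, r = l ++ x :: t ∧ s = l ++ t

theorem IsOneInsertion.length_eq {s r : List α} (h : IsOneInsertion s r) :
    r.length = s.length + 1 := by
  obtain ⟨l, x, t, rfl, rfl⟩ := h
  simp only [length_append, length_cons]
  omega

theorem IsOneInsertion.append_left {s r : List α} (h : IsOneInsertion s r) (l : List α) :
    IsOneInsertion (l ++ s) (l ++ r) := by
  obtain ⟨l', x, t, rfl, rfl⟩ := h
  exact ⟨l ++ l', x, t, by simp, by simp⟩

theorem isOneInsertion_cons (x : α) (s : List α) : IsOneInsertion s (x :: s) :=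
  ⟨[], x, s, rfl, rfl⟩

theorem isOneInsertion_eraseP {p : α → Bool} {r : List α} (h : r.any p) :
    IsOneInsertion (r.eraseP p) r := by
  obtain ⟨a, ha, hpa⟩ := List.any_eq_true.1 h
  obtain ⟨x, l, t, -, -, rfl, he⟩ := List.exists_of_eraseP ha hpa
  exact ⟨l, x, t, rfl, he⟩

def matchOrPush (p : α → Bool) (v : α) (r : List α) : List α :=
  if r.any p then r.eraseP p else v :: r

theorem IsOneInsertion.matchOrPush_or {s r : List α} (h : IsOneInsertion s r) (p : α → Bool)
    (v : α) :
    IsOneInsertion (matchOrPush p v s) (matchOrPush p v r) ∨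
      IsOneInsertion (matchOrPush p v r) (matchOrPush p v s) := by
  obtain ⟨l, x, t, rfl, rfl⟩ := h
  simp only [matchOrPush, any_append, any_cons, eraseP_append, Bool.or_eq_true]
  by_cases hl : l.any p
  · simp only [hl, true_or, if_true]
    exact Or.inl ⟨l.eraseP p, x, t, rfl, rfl⟩
  simp only [hl, Bool.false_eq_true, false_or]
  by_cases hx : p x
  · by_cases ht : t.any p
    · simp only [hx, ht, or_true, ↓reduceIte, eraseP_cons_of_pos]
      exact Or.inl ((isOneInsertion_eraseP ht).append_left l)
    · simp only [hx, ht, ↓reduceIte, eraseP_cons_of_pos]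
      exact Or.inr (isOneInsertion_cons v _)
  · by_cases ht : t.any p
    · simp only [ht, or_true, ↓reduceIte, eraseP_cons_of_neg hx]
      exact Or.inl ⟨l, x, t.eraseP p, rfl, rfl⟩
    · simp only [hx, ht, or_self, ↓reduceIte]
      exact Or.inl ⟨v :: l, x, t, rfl, rfl⟩

theorem IsOneInsertion.foldl_or {β : Type*} {f : List α → β → List α}
    (hf : ∀ b {s r}, IsOneInsertion s r →
      IsOneInsertion (f s b) (f r b) ∨ IsOneInsertion (f r b) (f s b))
    (z : List β) {s r : List α} (h : IsOneInsertion s r) :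
    IsOneInsertion (z.foldl f s) (z.foldl f r) ∨ IsOneInsertion (z.foldl f r) (z.foldl f s) := by
  induction z generalizing s r with
  | nil => exact Or.inl h
  | cons b z ih =>
    rcases hf b h with h' | h'
    · exact ih h'
    · exact (ih h').symm

theorem length_foldl_le_add_of_isOneInsertion {β : Type*} {f : List α → β → List α}
    (hf : ∀ b {s r}, IsOneInsertion s r →
      IsOneInsertion (f s b) (f r b) ∨ IsOneInsertion (f r b) (f s b))
    (z : List β) (w : List α) :
    (z.foldl f w).length ≤ w.length + (z.foldl f []).length := by
  induction w with
  | nil => simp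
  | cons x w ih =>
    rcases IsOneInsertion.foldl_or hf z (isOneInsertion_cons x w) with h | h <;>
    · have := h.length_eq
      simp only [length_cons]
      omega

theorem lcfmStep_reverse (G : SimpleGraph α) [DecidableRel G.Adj] (w : List α) (v : α) :
    (lcfmStep G w v).reverse = matchOrPush (G.Adj · v) v w.reverse := by
  unfold lcfmStep matchOrPush
  cases h : w.reverse.findIdx? (fun u => decide (G.Adj u v)) with
  | none =>
    have : w.reverse.any (G.Adj · v) = false := by
      rw [← findIdx?_isSome, h, Option.isSome_none]
    simp [this]
  | some k =>
    have : w.reverse.any (G.Adj · v) = true := by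
      rw [← findIdx?_isSome, h, Option.isSome_some]
    simp [this, eraseP_eq_eraseIdx, h]

theorem foldl_lcfmStep_reverse (G : SimpleGraph α) [DecidableRel G.Adj] (z w : List α) :
    (z.foldl (lcfmStep G) w).reverse =
      z.foldl (fun r v => matchOrPush (G.Adj · v) v r) w.reverse :=
  (foldl_hom reverse fun w v => (lcfmStep_reverse G w v).symm).symm

theorem length_foldl_lcfmStep_le (G : SimpleGraph α) [DecidableRel G.Adj] (z w : List α) :
    (z.foldl (lcfmStep G) w).length ≤ w.length + (lcfmQ G z).length := by
  have hrev (w : List α) : (z.foldl (lcfmStep G) w).length =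
      (z.foldl (fun r v => matchOrPush (G.Adj · v) v r) w.reverse).length := by
    rw [← foldl_lcfmStep_reverse, length_reverse]
  calc (z.foldl (lcfmStep G) w).length
      = (z.foldl (fun r v => matchOrPush (G.Adj · v) v r) w.reverse).length := hrev w
    _ ≤ w.reverse.length + (z.foldl (fun r v => matchOrPush (G.Adj · v) v r) []).length :=
      length_foldl_le_add_of_isOneInsertion (fun v _ _ h => h.matchOrPush_or (G.Adj · v) v) z _
    _ = w.length + (lcfmQ G z).length := by rw [length_reverse, lcfmQ, hrev, reverse_nil]

/-- **LCFM is sub-additive**: for any arrival words `z'`, `z''`,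
`|Q_LCFM(z'z'')| ≤ |Q_LCFM(z')| + |Q_LCFM(z'')|`. -/
theorem lcfm_subadditive (G : SimpleGraph V) [DecidableRel G.Adj]
    (z' z'' : List V) :
    (lcfmQ G (z' ++ z'')).length ≤ (lcfmQ G z').length + (lcfmQ G z'').length := by
  simpa only [lcfmQ, foldl_append] using length_foldl_lcfmStep_le G z'' (lcfmQ G z')
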